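/- arXiv:0712.3688 — 3 statements merged into one kernel-verified Lean document; each statement's English description precedes it below -/
import Mathlib

section
/- The Gromov–Hausdorff–Prokhorov distance satisfies the triangle inequality: for any three nonempty compact metric spaces (X,d), (X',d'), (X'',d'') equipped with Borel probability measures μ, μ', μ'', one has d_GHP((X,d,μ),(X'',d'',μ'')) ≤ d_GHP((X,d,μ),(X',d',μ')) + d_GHP((X',d',μ'),(X'',d'',μ'')). -/
open MeasureTheory Set

section GHP

variable {X Y : Type*}

/-- A "glue metric": a metric on the disjoint union `X ⊕ Y` whose restrictions to `X`
and `Y` coincide with the given metrics. -/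
structure IsGlueMetric [MetricSpace X] [MetricSpace Y] (δ : X ⊕ Y → X ⊕ Y → ℝ) : Prop where
  refl : ∀ a, δ a a = 0
  pos : ∀ a b, a ≠ b → 0 < δ a b
  symm : ∀ a b, δ a b = δ b a
  triangle : ∀ a b c, δ a c ≤ δ a b + δ b c
  restr_left : ∀ x x' : X, δ (Sum.inl x) (Sum.inl x') = dist x x'
  restr_right : ∀ y y' : Y, δ (Sum.inr y) (Sum.inr y') = dist y y'

/-- The Hausdorff distance, in `(X ⊕ Y, δ)`, between (the images of) `X` and `Y`:
the infimum of `ε > 0` such that each space is contained in the open `ε`-neighborhood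
of the other. -/
noncomputable def glueHausdorffDist (δ : X ⊕ Y → X ⊕ Y → ℝ) : ℝ :=
  sInf {ε : ℝ | 0 < ε ∧ (∀ x : X, ∃ y : Y, δ (Sum.inl x) (Sum.inr y) < ε) ∧
    (∀ y : Y, ∃ x : X, δ (Sum.inl x) (Sum.inr y) < ε)}

/-- The Prokhorov distance, in `(X ⊕ Y, δ)`, between the pushforwards of `μ` and `ν`:
the infimum of `ε > 0` such that `μ(C) ≤ ν(C^ε) + ε` for every `δ`-closed set `C`,
where `C^ε` is the open `ε`-neighborhood for `δ`. -/
noncomputable def glueProkhorovDist [MeasurableSpace X] [MeasurableSpace Y]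
    (δ : X ⊕ Y → X ⊕ Y → ℝ) (μ : Measure X) (ν : Measure Y) : ℝ :=
  sInf {ε : ℝ | 0 < ε ∧ ∀ C : Set (X ⊕ Y),
    (∀ a ∉ C, ∃ η > 0, ∀ b ∈ C, η ≤ δ a b) →
    μ (Sum.inl ⁻¹' C) ≤ ν (Sum.inr ⁻¹' {a | ∃ b ∈ C, δ a b < ε}) + ENNReal.ofReal ε}

/-- The Gromov–Hausdorff–Prokhorov distance between two metric spaces equipped with
Borel measures: the infimum, over all metrics `δ` on the disjoint union restricting to
the given metrics, of the maximum of the Hausdorff distance between the two spaces and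
the Prokhorov distance between the pushforward measures. -/
noncomputable def ghpDist [MetricSpace X] [MetricSpace Y]
    [MeasurableSpace X] [MeasurableSpace Y] (μ : Measure X) (ν : Measure Y) : ℝ :=
  sInf {r : ℝ | ∃ δ : X ⊕ Y → X ⊕ Y → ℝ, IsGlueMetric δ ∧
    r = max (glueHausdorffDist δ) (glueProkhorovDist δ μ ν)}

end GHP

/-!
Glue a metric `δ₁` on `X ⊔ Y` and a metric `δ₂` on `Y ⊔ Z` along `Y`: the new distance between
`x : X` and `z : Z` is `min_y δ₁ x y + δ₂ y z`, the minimum being attained (hence positive) as `Y`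
is compact. Hausdorff bounds then add along chains `x ~ y ~ z`. For Prokhorov bounds `s` and `t`
and a closed `A ⊆ X`, writing `A^s` for the part in the other space of the open `s`-neighbourhood
(`glueNbhd`), `μ A ≤ μ' (A^s) + s ≤ μ'' ((closure A^s)^t) + s + t`, and `(closure A^s)^t ⊆ A^(s+t)`
for the glued metric.
-/

open Sum

lemma sInf_le_sInf_add_sInf {S T U : Set ℝ} (hS : S.Nonempty) (hT : T.Nonempty)
    (h : ∀ s ∈ S, ∀ t ∈ T, sInf U ≤ s + t) : sInf U ≤ sInf S + sInf T := by
  have hT' : ∀ s ∈ S, sInf U - s ≤ sInf T :=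
    fun s hs => le_csInf hT fun t ht => by linarith [h s hs t ht]
  have hS' : sInf U - sInf T ≤ sInf S := le_csInf hS fun s hs => by linarith [hT' s hs]
  linarith

section Radii

variable {X Y : Type*} {δ : X ⊕ Y → X ⊕ Y → ℝ}

/-- Closedness for `δ`; `α` carries no topology induced by `δ`. -/
def IsGlueClosed {α : Type*} (δ : α → α → ℝ) (C : Set α) : Prop :=
  ∀ a ∉ C, ∃ η > 0, ∀ b ∈ C, η ≤ δ a b

def glueNbhd (δ : X ⊕ Y → X ⊕ Y → ℝ) (K : Set X) (ε : ℝ) : Set Y :=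
  {y | ∃ x ∈ K, δ (inr y) (inl x) < ε}

def hausdorffRadii (δ : X ⊕ Y → X ⊕ Y → ℝ) : Set ℝ :=
  {ε : ℝ | 0 < ε ∧ (∀ x : X, ∃ y : Y, δ (inl x) (inr y) < ε) ∧
    (∀ y : Y, ∃ x : X, δ (inl x) (inr y) < ε)}

def prokhorovRadii [MeasurableSpace X] [MeasurableSpace Y]
    (δ : X ⊕ Y → X ⊕ Y → ℝ) (μ : Measure X) (ν : Measure Y) : Set ℝ :=
  {ε : ℝ | 0 < ε ∧ ∀ C : Set (X ⊕ Y), IsGlueClosed δ C →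
    μ (inl ⁻¹' C) ≤ ν (inr ⁻¹' {a | ∃ b ∈ C, δ a b < ε}) + ENNReal.ofReal ε}

lemma bddBelow_hausdorffRadii : BddBelow (hausdorffRadii δ) := ⟨0, fun _ hε => hε.1.le⟩

lemma bddBelow_prokhorovRadii [MeasurableSpace X] [MeasurableSpace Y]
    (μ : Measure X) (ν : Measure Y) : BddBelow (prokhorovRadii δ μ ν) :=
  ⟨0, fun _ hε => hε.1.le⟩

lemma prokhorovRadii_nonempty [MeasurableSpace X] [MeasurableSpace Y]
    (μ : Measure X) [IsFiniteMeasure μ] (ν : Measure Y) : (prokhorovRadii δ μ ν).Nonempty := by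
  refine ⟨(μ univ).toReal + 1, by positivity, fun C _ => ?_⟩
  calc μ (inl ⁻¹' C) ≤ μ univ := measure_mono (subset_univ _)
    _ = ENNReal.ofReal (μ univ).toReal := (ENNReal.ofReal_toReal (measure_ne_top μ univ)).symm
    _ ≤ ENNReal.ofReal ((μ univ).toReal + 1) := ENNReal.ofReal_le_ofReal (by linarith)
    _ ≤ _ := le_add_self

end Radii

section GlueMetric

variable {X Y : Type*} [MetricSpace X] [MetricSpace Y] {δ : X ⊕ Y → X ⊕ Y → ℝ}

lemma isGlueMetric_sumDist : IsGlueMetric (Metric.Sum.dist : X ⊕ Y → X ⊕ Y → ℝ) :=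
  letI := Metric.metricSpaceSum (X := X) (Y := Y)
  ⟨dist_self, fun _ _ => dist_pos.2, dist_comm, dist_triangle, fun _ _ => rfl, fun _ _ => rfl⟩

namespace IsGlueMetric

lemma nonneg (h : IsGlueMetric δ) (a b : X ⊕ Y) : 0 ≤ δ a b := by
  linarith [h.triangle a b a, h.refl a, h.symm a b]

lemma continuous_inl_inr (h : IsGlueMetric δ) :
    Continuous fun p : X × Y => δ (inl p.1) (inr p.2) := by
  refine (LipschitzWith.of_le_add_mul 2 fun p q => ?_).continuous
  have h₁ := h.triangle (inl p.1) (inl q.1) (inr p.2)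
  have h₂ := h.triangle (inl q.1) (inr q.2) (inr p.2)
  rw [h.restr_left] at h₁
  rw [h.restr_right] at h₂
  have hpq := Prod.dist_eq (x := p) (y := q)
  push_cast
  linarith [le_max_left (dist p.1 q.1) (dist p.2 q.2), le_max_right (dist p.1 q.1) (dist p.2 q.2),
    dist_comm q.2 p.2]

lemma isClosed_preimage_inl (h : IsGlueMetric δ) {C : Set (X ⊕ Y)} (hC : IsGlueClosed δ C) :
    IsClosed (inl ⁻¹' C) := by
  refine isOpen_compl_iff.1 (Metric.isOpen_iff.2 fun x hx => ?_)
  obtain ⟨η, hη, hηC⟩ := hC (inl x) hx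
  refine ⟨η, hη, fun x' hx' hx'C => ?_⟩
  have := hηC (inl x') hx'C
  rw [h.restr_left, dist_comm] at this
  exact (Metric.mem_ball.1 hx').not_ge this

lemma isGlueClosed_image_inl [CompactSpace X] (h : IsGlueMetric δ) {K : Set X}
    (hK : IsClosed K) : IsGlueClosed δ (inl '' K) := by
  rintro (x | y) ha
  · obtain ⟨η, hη, hball⟩ := Metric.isOpen_iff.1 hK.isOpen_compl x fun hx => ha ⟨x, hx, rfl⟩
    refine ⟨η, hη, ?_⟩
    rintro _ ⟨x', hx', rfl⟩
    rw [h.restr_left]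
    exact not_lt.1 fun hlt => hball (Metric.mem_ball'.2 hlt) hx'
  · have hcont : Continuous fun x : X => δ (inr y) (inl x) :=
      (h.continuous_inl_inr.comp (Continuous.prodMk_left y)).congr fun x => h.symm _ _
    obtain ⟨η, hη, hηK⟩ := hK.isCompact.exists_forall_le' hcont.continuousOn
      fun x _ => h.pos (inr y) (inl x) inr_ne_inl
    exact ⟨η, hη, by rintro _ ⟨x, hx, rfl⟩; exact hηK x hx⟩

lemma hausdorffRadii_nonempty [CompactSpace X] [CompactSpace Y] [Nonempty X] [Nonempty Y]
    (h : IsGlueMetric δ) : (hausdorffRadii δ).Nonempty := by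
  obtain ⟨M, hM⟩ := (isCompact_range h.continuous_inl_inr).bddAbove
  have hbound : ∀ x y, δ (inl x) (inr y) < |M| + 1 := fun x y =>
    ((hM ⟨(x, y), rfl⟩).trans (le_abs_self M)).trans_lt (lt_add_one _)
  exact ⟨|M| + 1, by positivity, fun x => ⟨Classical.arbitrary Y, hbound x _⟩,
    fun y => ⟨Classical.arbitrary X, hbound _ y⟩⟩

lemma measure_le_of_mem_prokhorovRadii [CompactSpace X] [MeasurableSpace X] [MeasurableSpace Y]
    (h : IsGlueMetric δ) {μ : Measure X} {ν : Measure Y} {ε : ℝ}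
    (hε : ε ∈ prokhorovRadii δ μ ν) {K : Set X} (hK : IsClosed K) :
    μ K ≤ ν (glueNbhd δ K ε) + ENNReal.ofReal ε := by
  have := hε.2 (inl '' K) (h.isGlueClosed_image_inl hK)
  rw [preimage_image_eq K inl_injective] at this
  refine this.trans (add_le_add_left (measure_mono ?_) _)
  rintro y ⟨_, ⟨x, hx, rfl⟩, hxy⟩
  exact ⟨x, hx, hxy⟩

end IsGlueMetric

end GlueMetric

section Composition

variable {X Y Z : Type*} [MetricSpace X] [MetricSpace Y] [MetricSpace Z]
  {δ₁ : X ⊕ Y → X ⊕ Y → ℝ} {δ₂ : Y ⊕ Z → Y ⊕ Z → ℝ}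

noncomputable def crossDist (δ₁ : X ⊕ Y → X ⊕ Y → ℝ) (δ₂ : Y ⊕ Z → Y ⊕ Z → ℝ) (x : X) (z : Z) : ℝ :=
  ⨅ y : Y, δ₁ (inl x) (inr y) + δ₂ (inl y) (inr z)

noncomputable def glueComp (δ₁ : X ⊕ Y → X ⊕ Y → ℝ) (δ₂ : Y ⊕ Z → Y ⊕ Z → ℝ) : X ⊕ Z → X ⊕ Z → ℝ
  | inl x, inl x' => dist x x'
  | inl x, inr z => crossDist δ₁ δ₂ x z
  | inr z, inl x => crossDist δ₁ δ₂ x z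
  | inr z, inr z' => dist z z'

lemma crossDist_le (h₁ : IsGlueMetric δ₁) (h₂ : IsGlueMetric δ₂) (x : X) (z : Z) (y : Y) :
    crossDist δ₁ δ₂ x z ≤ δ₁ (inl x) (inr y) + δ₂ (inl y) (inr z) :=
  ciInf_le ⟨0, by rintro _ ⟨y', rfl⟩; exact add_nonneg (h₁.nonneg _ _) (h₂.nonneg _ _)⟩ y

lemma glueNbhd_closure_glueNbhd_subset (h₁ : IsGlueMetric δ₁) (h₂ : IsGlueMetric δ₂)
    (A : Set X) (s t : ℝ) :
    glueNbhd δ₂ (closure (glueNbhd δ₁ A s)) t ⊆ glueNbhd (glueComp δ₁ δ₂) A (s + t) := by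
  rintro z ⟨y, hy, hyz⟩
  obtain ⟨y', ⟨x, hx, hxy'⟩, hyy'⟩ :=
    Metric.mem_closure_iff.1 hy _ (sub_pos.2 hyz)
  refine ⟨x, hx, (crossDist_le h₁ h₂ x z y').trans_lt ?_⟩
  have := h₂.triangle (inl y') (inl y) (inr z)
  rw [h₂.restr_left, dist_comm] at this
  linarith [h₁.symm (inr y') (inl x), h₂.symm (inr z) (inl y)]

variable [CompactSpace Y] [Nonempty Y]

lemma exists_crossDist_eq (h₁ : IsGlueMetric δ₁) (h₂ : IsGlueMetric δ₂) (x : X) (z : Z) :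
    ∃ y : Y, crossDist δ₁ δ₂ x z = δ₁ (inl x) (inr y) + δ₂ (inl y) (inr z) := by
  have hcont : Continuous fun y : Y => δ₁ (inl x) (inr y) + δ₂ (inl y) (inr z) :=
    (h₁.continuous_inl_inr.comp (Continuous.prodMk_right x)).add
      (h₂.continuous_inl_inr.comp (Continuous.prodMk_left z))
  obtain ⟨y, -, hy⟩ := isCompact_univ.exists_isMinOn univ_nonempty hcont.continuousOn
  exact ⟨y, le_antisymm (crossDist_le h₁ h₂ x z y) (le_ciInf fun y' => hy (mem_univ y'))⟩

lemma crossDist_pos (h₁ : IsGlueMetric δ₁) (h₂ : IsGlueMetric δ₂) (x : X) (z : Z) :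
    0 < crossDist δ₁ δ₂ x z := by
  obtain ⟨y, hy⟩ := exists_crossDist_eq h₁ h₂ x z
  rw [hy]
  exact add_pos (h₁.pos _ _ inl_ne_inr) (h₂.pos _ _ inl_ne_inr)

lemma crossDist_le_dist_add (h₁ : IsGlueMetric δ₁) (h₂ : IsGlueMetric δ₂) (x x' : X) (z : Z) :
    crossDist δ₁ δ₂ x z ≤ dist x x' + crossDist δ₁ δ₂ x' z := by
  obtain ⟨y, hy⟩ := exists_crossDist_eq h₁ h₂ x' z
  have := h₁.triangle (inl x) (inl x') (inr y)
  rw [h₁.restr_left] at this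
  linarith [crossDist_le h₁ h₂ x z y]

lemma crossDist_le_add_dist (h₁ : IsGlueMetric δ₁) (h₂ : IsGlueMetric δ₂) (x : X) (z z' : Z) :
    crossDist δ₁ δ₂ x z ≤ crossDist δ₁ δ₂ x z' + dist z' z := by
  obtain ⟨y, hy⟩ := exists_crossDist_eq h₁ h₂ x z'
  have := h₂.triangle (inl y) (inr z') (inr z)
  rw [h₂.restr_right] at this
  linarith [crossDist_le h₁ h₂ x z y]

lemma dist_le_crossDist_add_crossDist (h₁ : IsGlueMetric δ₁) (h₂ : IsGlueMetric δ₂)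
    (x x' : X) (z : Z) : dist x x' ≤ crossDist δ₁ δ₂ x z + crossDist δ₁ δ₂ x' z := by
  obtain ⟨y, hy⟩ := exists_crossDist_eq h₁ h₂ x z
  obtain ⟨y', hy'⟩ := exists_crossDist_eq h₁ h₂ x' z
  have hX := h₁.triangle (inl x) (inr y) (inl x')
  have hX' := h₁.triangle (inr y) (inr y') (inl x')
  have hY := h₂.triangle (inl y) (inr z) (inl y')
  rw [h₁.restr_left] at hX
  rw [h₁.restr_right] at hX'
  rw [h₂.restr_left] at hY
  linarith [h₁.symm (inr y') (inl x'), h₂.symm (inr z) (inl y')]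

lemma dist_le_crossDist_add_crossDist' (h₁ : IsGlueMetric δ₁) (h₂ : IsGlueMetric δ₂)
    (x : X) (z z' : Z) : dist z z' ≤ crossDist δ₁ δ₂ x z + crossDist δ₁ δ₂ x z' := by
  obtain ⟨y, hy⟩ := exists_crossDist_eq h₁ h₂ x z
  obtain ⟨y', hy'⟩ := exists_crossDist_eq h₁ h₂ x z'
  have hZ := h₂.triangle (inr z) (inl y) (inr z')
  have hZ' := h₂.triangle (inl y) (inl y') (inr z')
  have hY := h₁.triangle (inr y) (inl x) (inr y')
  rw [h₂.restr_right] at hZ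
  rw [h₂.restr_left] at hZ'
  rw [h₁.restr_right] at hY
  linarith [h₁.symm (inr y) (inl x), h₂.symm (inr z) (inl y)]

lemma isGlueMetric_glueComp (h₁ : IsGlueMetric δ₁) (h₂ : IsGlueMetric δ₂) :
    IsGlueMetric (glueComp δ₁ δ₂) where
  refl := by rintro (x | z) <;> exact dist_self _
  pos := by
    rintro (x | z) (x' | z') hne
    · exact dist_pos.2 fun hxx' => hne (congrArg inl hxx')
    · exact crossDist_pos h₁ h₂ x z'
    · exact crossDist_pos h₁ h₂ x' z
    · exact dist_pos.2 fun hzz' => hne (congrArg inr hzz')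
  symm := by rintro (x | z) (x' | z') <;> first | rfl | exact dist_comm _ _
  triangle := by
    rintro (x | z) (x' | z') (x'' | z'')
    · exact dist_triangle x x' x''
    · exact crossDist_le_dist_add h₁ h₂ x x' z''
    · exact dist_le_crossDist_add_crossDist h₁ h₂ x x'' z'
    · exact crossDist_le_add_dist h₁ h₂ x z'' z'
    · exact (crossDist_le_dist_add h₁ h₂ x'' x' z).trans_eq (by rw [dist_comm, add_comm]; rfl)
    · exact dist_le_crossDist_add_crossDist' h₁ h₂ x' z z''
    · exact (crossDist_le_add_dist h₁ h₂ x'' z z').trans_eq (by rw [dist_comm, add_comm]; rfl)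
    · exact dist_triangle z z' z''
  restr_left _ _ := rfl
  restr_right _ _ := rfl

end Composition

section Distances

variable {X Y Z : Type*} [MetricSpace X] [MetricSpace Y] [MetricSpace Z]
  {δ₁ : X ⊕ Y → X ⊕ Y → ℝ} {δ₂ : Y ⊕ Z → Y ⊕ Z → ℝ}

lemma add_mem_hausdorffRadii_glueComp (h₁ : IsGlueMetric δ₁) (h₂ : IsGlueMetric δ₂) {s t : ℝ}
    (hs : s ∈ hausdorffRadii δ₁) (ht : t ∈ hausdorffRadii δ₂) :
    s + t ∈ hausdorffRadii (glueComp δ₁ δ₂) := by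
  refine ⟨add_pos hs.1 ht.1, fun x => ?_, fun z => ?_⟩
  · obtain ⟨y, hxy⟩ := hs.2.1 x
    obtain ⟨z, hyz⟩ := ht.2.1 y
    exact ⟨z, (crossDist_le h₁ h₂ x z y).trans_lt (add_lt_add hxy hyz)⟩
  · obtain ⟨y, hyz⟩ := ht.2.2 z
    obtain ⟨x, hxy⟩ := hs.2.2 y
    exact ⟨x, (crossDist_le h₁ h₂ x z y).trans_lt (add_lt_add hxy hyz)⟩

lemma glueHausdorffDist_glueComp_le [CompactSpace X] [CompactSpace Y] [CompactSpace Z]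
    [Nonempty X] [Nonempty Y] [Nonempty Z] (h₁ : IsGlueMetric δ₁) (h₂ : IsGlueMetric δ₂) :
    glueHausdorffDist (glueComp δ₁ δ₂) ≤ glueHausdorffDist δ₁ + glueHausdorffDist δ₂ :=
  sInf_le_sInf_add_sInf h₁.hausdorffRadii_nonempty h₂.hausdorffRadii_nonempty fun _ hs _ ht =>
    csInf_le bddBelow_hausdorffRadii (add_mem_hausdorffRadii_glueComp h₁ h₂ hs ht)

variable [MeasurableSpace X] [MeasurableSpace Y] [MeasurableSpace Z]

lemma add_mem_prokhorovRadii_glueComp [CompactSpace X] [CompactSpace Y] [Nonempty Y]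
    (h₁ : IsGlueMetric δ₁) (h₂ : IsGlueMetric δ₂) {μ : Measure X} {μ' : Measure Y}
    {μ'' : Measure Z} {s t : ℝ} (hs : s ∈ prokhorovRadii δ₁ μ μ')
    (ht : t ∈ prokhorovRadii δ₂ μ' μ'') : s + t ∈ prokhorovRadii (glueComp δ₁ δ₂) μ μ'' := by
  refine ⟨add_pos hs.1 ht.1, fun C hC => ?_⟩
  set A : Set X := inl ⁻¹' C
  have hA : IsClosed A := (isGlueMetric_glueComp h₁ h₂).isClosed_preimage_inl hC
  calc μ A ≤ μ' (glueNbhd δ₁ A s) + ENNReal.ofReal s := h₁.measure_le_of_mem_prokhorovRadii hs hA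
    _ ≤ μ' (closure (glueNbhd δ₁ A s)) + ENNReal.ofReal s := by
      gcongr; exact subset_closure
    _ ≤ μ'' (glueNbhd δ₂ (closure (glueNbhd δ₁ A s)) t) + ENNReal.ofReal t + ENNReal.ofReal s := by
      gcongr; exact h₂.measure_le_of_mem_prokhorovRadii ht isClosed_closure
    _ ≤ μ'' (glueNbhd (glueComp δ₁ δ₂) A (s + t)) + ENNReal.ofReal t + ENNReal.ofReal s := by
      gcongr; exact glueNbhd_closure_glueNbhd_subset h₁ h₂ A s t
    _ ≤ μ'' (inr ⁻¹' {a | ∃ b ∈ C, glueComp δ₁ δ₂ a b < s + t}) + ENNReal.ofReal (s + t) := by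
      rw [add_assoc, ← ENNReal.ofReal_add ht.1.le hs.1.le, add_comm t s]
      gcongr
      exact fun z ⟨x, hx, hxz⟩ => ⟨inl x, hx, hxz⟩

lemma glueProkhorovDist_glueComp_le [CompactSpace X] [CompactSpace Y] [Nonempty Y]
    (h₁ : IsGlueMetric δ₁) (h₂ : IsGlueMetric δ₂) (μ : Measure X) (μ' : Measure Y)
    (μ'' : Measure Z) [IsFiniteMeasure μ] [IsFiniteMeasure μ'] :
    glueProkhorovDist (glueComp δ₁ δ₂) μ μ'' ≤
      glueProkhorovDist δ₁ μ μ' + glueProkhorovDist δ₂ μ' μ'' :=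
  sInf_le_sInf_add_sInf (prokhorovRadii_nonempty μ μ') (prokhorovRadii_nonempty μ' μ'')
    fun _ hs _ ht =>
      csInf_le (bddBelow_prokhorovRadii μ μ'') (add_mem_prokhorovRadii_glueComp h₁ h₂ hs ht)

end Distances

lemma ghpDist_le_max {X Y : Type*} [MetricSpace X] [MetricSpace Y] [MeasurableSpace X]
    [MeasurableSpace Y] {δ : X ⊕ Y → X ⊕ Y → ℝ} (h : IsGlueMetric δ) (μ : Measure X)
    (ν : Measure Y) : ghpDist μ ν ≤ max (glueHausdorffDist δ) (glueProkhorovDist δ μ ν) :=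
  csInf_le ⟨0, by
    rintro _ ⟨δ', -, rfl⟩
    exact le_max_of_le_left (Real.sInf_nonneg fun _ hε => hε.1.le)⟩ ⟨δ, h, rfl⟩

theorem ghpDist_triangle_general
    {X Y Z : Type*} [MetricSpace X] [MetricSpace Y] [MetricSpace Z]
    [CompactSpace X] [CompactSpace Y] [CompactSpace Z]
    [Nonempty X] [Nonempty Y] [Nonempty Z]
    [MeasurableSpace X] [MeasurableSpace Y] [MeasurableSpace Z]
    (μ : Measure X) (μ' : Measure Y) (μ'' : Measure Z)
    [IsProbabilityMeasure μ] [IsProbabilityMeasure μ'] :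
    ghpDist μ μ'' ≤ ghpDist μ μ' + ghpDist μ' μ'' := by
  refine sInf_le_sInf_add_sInf ⟨_, _, isGlueMetric_sumDist, rfl⟩
    ⟨_, _, isGlueMetric_sumDist, rfl⟩ ?_
  rintro _ ⟨δ₁, h₁, rfl⟩ _ ⟨δ₂, h₂, rfl⟩
  calc ghpDist μ μ''
      ≤ max (glueHausdorffDist (glueComp δ₁ δ₂)) (glueProkhorovDist (glueComp δ₁ δ₂) μ μ'') :=
        ghpDist_le_max (isGlueMetric_glueComp h₁ h₂) μ μ''
    _ ≤ max (glueHausdorffDist δ₁ + glueHausdorffDist δ₂)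
          (glueProkhorovDist δ₁ μ μ' + glueProkhorovDist δ₂ μ' μ'') :=
        max_le_max (glueHausdorffDist_glueComp_le h₁ h₂)
          (glueProkhorovDist_glueComp_le h₁ h₂ μ μ' μ'')
    _ ≤ _ := max_add_add_le_max_add_max

/-- The Gromov–Hausdorff–Prokhorov distance satisfies the triangle inequality. -/
theorem ghpDist_triangle
    {X Y Z : Type*} [MetricSpace X] [MetricSpace Y] [MetricSpace Z]
    [CompactSpace X] [CompactSpace Y] [CompactSpace Z]
    [Nonempty X] [Nonempty Y] [Nonempty Z]
    [MeasurableSpace X] [BorelSpace X] [MeasurableSpace Y] [BorelSpace Y]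
    [MeasurableSpace Z] [BorelSpace Z]
    (μ : Measure X) (μ' : Measure Y) (μ'' : Measure Z)
    [IsProbabilityMeasure μ] [IsProbabilityMeasure μ'] [IsProbabilityMeasure μ''] :
    ghpDist μ μ'' ≤ ghpDist μ μ' + ghpDist μ' μ'' :=
  ghpDist_triangle_general μ μ' μ''
end

section
/- Let (X,d), (X',d'), (X'',d'') be nonempty compact metric spaces with Borel probability measures μ, μ', μ''. Let ℛ_1 be a compact correspondence between X and X' and ℛ_2 a compact correspondence between X' and X'', and let ν_1 be a coupling of μ and μ' and ν_2 a coupling of μ' and μ''. Then the composition ℛ_3 := {(x,x'') ∈ X × X'' : ∃ x' ∈ X', (x,x') ∈ ℛ_1 and (x',x'') ∈ ℛ_2} is a compact correspondence between X and X'' with dis ℛ_3 ≤ dis ℛ_1 + dis ℛ_2, and there exists a coupling ν_3 of μ and μ'' with ν_3((ℛ_3)^c) ≤ ν_1((ℛ_1)^c) + ν_2((ℛ_2)^c), where A^c denotes the complement. -/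
/-!
The composite `R₁ ○ R₂` is the image of the compact set `{((x, y), (y', z)) ∈ R₁ ×ˢ R₂ | y = y'}`,
and its distortion is controlled by the triangle inequality through the middle point `y`.
For the coupling, glue `ν₁` and `ν₂` along their common marginal `μ'`: draw `(x, y)` from `ν₁`,
then `z` from the disintegration of `ν₂` at `y`. This measure on `(X × Y) × Z` projects to `ν₁`
and to `ν₂`, and a triple with `(x, z) ∉ R₁ ○ R₂` has `(x, y) ∉ R₁` or `(y, z) ∉ R₂`, so a union
bound gives the estimate.
-/

open MeasureTheory

section Corr

variable {X Y : Type*}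

/-- A correspondence between `X` and `Y`. -/
def IsCorrespondence (R : Set (X × Y)) : Prop :=
  (∀ x : X, ∃ y : Y, (x, y) ∈ R) ∧ (∀ y : Y, ∃ x : X, (x, y) ∈ R)

/-- The distortion of a correspondence. -/
noncomputable def distortion [MetricSpace X] [MetricSpace Y] (R : Set (X × Y)) : ℝ :=
  sSup {r : ℝ | ∃ p ∈ R, ∃ q ∈ R, r = |dist p.1 q.1 - dist p.2 q.2|}

/-- A coupling of `μ` and `μ'`: a measure on the product with the given marginals. -/
def IsCoupling [MeasurableSpace X] [MeasurableSpace Y]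
    (ν : Measure (X × Y)) (μ : Measure X) (μ' : Measure Y) : Prop :=
  Measure.map Prod.fst ν = μ ∧ Measure.map Prod.snd ν = μ'

end Corr

open ProbabilityTheory SetRel

section

variable {X Y Z : Type*}

lemma IsCompact.setRelComp [TopologicalSpace X] [TopologicalSpace Y] [TopologicalSpace Z]
    [T2Space Y] {R : SetRel X Y} {S : SetRel Y Z} (hR : IsCompact R) (hS : IsCompact S) :
    IsCompact (R ○ S) := by
  have hglued : IsCompact (R ×ˢ S ∩ {q | q.1.2 = q.2.1}) :=
    (hR.prod hS).inter_right (isClosed_eq (by fun_prop) (by fun_prop))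
  convert hglued.image (f := fun q : (X × Y) × (Y × Z) ↦ (q.1.1, q.2.2)) (by fun_prop)
  ext ⟨x, z⟩
  constructor
  · rintro ⟨y, hxy, hyz⟩
    exact ⟨((x, y), (y, z)), ⟨⟨hxy, hyz⟩, rfl⟩, rfl⟩
  · rintro ⟨⟨⟨x, y⟩, ⟨y', z⟩⟩, ⟨⟨hxy, hyz⟩, rfl : y = y'⟩, hxz⟩
    obtain ⟨rfl, rfl⟩ := Prod.ext_iff.mp hxz
    exact ⟨y, hxy, hyz⟩

lemma IsCorrespondence.comp {R : SetRel X Y} {S : SetRel Y Z}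
    (hR : IsCorrespondence R) (hS : IsCorrespondence S) : IsCorrespondence (R ○ S) := by
  refine ⟨fun x ↦ ?_, fun z ↦ ?_⟩
  · obtain ⟨y, hxy⟩ := hR.1 x
    obtain ⟨z, hyz⟩ := hS.1 y
    exact ⟨z, y, hxy, hyz⟩
  · obtain ⟨y, hyz⟩ := hS.2 z
    obtain ⟨x, hxy⟩ := hR.2 y
    exact ⟨x, y, hxy, hyz⟩

section Distortion

variable [MetricSpace X] [MetricSpace Y] [MetricSpace Z]

lemma distortion_nonneg (R : SetRel X Y) : 0 ≤ distortion R :=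
  Real.sSup_nonneg <| by rintro r ⟨p, -, q, -, rfl⟩; exact abs_nonneg _

lemma le_distortion [BoundedSpace X] [BoundedSpace Y] {R : SetRel X Y} {p q : X × Y}
    (hp : p ∈ R) (hq : q ∈ R) : |dist p.1 q.1 - dist p.2 q.2| ≤ distortion R := by
  refine le_csSup ⟨Metric.diam (Set.univ : Set X) + Metric.diam (Set.univ : Set Y), ?_⟩
    ⟨p, hp, q, hq, rfl⟩
  rintro r ⟨p, -, q, -, rfl⟩
  calc |dist p.1 q.1 - dist p.2 q.2| ≤ dist p.1 q.1 + dist p.2 q.2 :=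
        (abs_sub _ _).trans_eq <| by rw [abs_of_nonneg dist_nonneg, abs_of_nonneg dist_nonneg]
    _ ≤ _ := add_le_add
        (Metric.dist_le_diam_of_mem (Bornology.IsBounded.all _) (Set.mem_univ _) (Set.mem_univ _))
        (Metric.dist_le_diam_of_mem (Bornology.IsBounded.all _) (Set.mem_univ _) (Set.mem_univ _))

lemma distortion_comp_le [BoundedSpace X] [BoundedSpace Y] [BoundedSpace Z]
    (R : SetRel X Y) (S : SetRel Y Z) : distortion (R ○ S) ≤ distortion R + distortion S := by
  refine Real.sSup_le ?_ (add_nonneg (distortion_nonneg R) (distortion_nonneg S))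
  rintro r ⟨⟨x₁, z₁⟩, ⟨y₁, hxy₁, hyz₁⟩, ⟨x₂, z₂⟩, ⟨y₂, hxy₂, hyz₂⟩, rfl⟩
  calc |dist x₁ x₂ - dist z₁ z₂|
      ≤ |dist x₁ x₂ - dist y₁ y₂| + |dist y₁ y₂ - dist z₁ z₂| := abs_sub_le _ _ _
    _ ≤ distortion R + distortion S :=
        add_le_add (le_distortion hxy₁ hxy₂) (le_distortion hyz₁ hyz₂)

end Distortion

namespace MeasureTheory.Measure

variable [MeasurableSpace X] [MeasurableSpace Y] [MeasurableSpace Z]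

lemma map_prodMap_compProd_comap (μ : Measure X) [SFinite μ] (κ : Kernel Y Z) [IsSFiniteKernel κ]
    {f : X → Y} (hf : Measurable f) :
    (μ ⊗ₘ κ.comap f hf).map (Prod.map f id) = μ.map f ⊗ₘ κ := by
  ext s hs
  rw [map_apply (by fun_prop) hs, compProd_apply (hf.prodMap measurable_id hs),
    compProd_apply hs, lintegral_map (Kernel.measurable_kernel_prodMk_left hs) hf]
  rfl

lemma map_compl_comp_le (m : Measure ((X × Y) × Z)) {R : SetRel X Y} {S : SetRel Y Z}
    (hRS : MeasurableSet (R ○ S)) :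
    m.map (Prod.map Prod.fst id) (R ○ S)ᶜ ≤ m.fst Rᶜ + m.map (Prod.map Prod.snd id) Sᶜ := by
  have hcover : Prod.map Prod.fst id ⁻¹' (R ○ S)ᶜ ⊆
      Prod.fst ⁻¹' Rᶜ ∪ Prod.map Prod.snd id ⁻¹' Sᶜ := by
    rintro ⟨⟨x, y⟩, z⟩ hxz
    by_cases hxy : (x, y) ∈ R
    · exact .inr fun hyz ↦ hxz ⟨y, hxy, hyz⟩
    · exact .inl hxy
  calc m.map (Prod.map Prod.fst id) (R ○ S)ᶜ
      = m (Prod.map Prod.fst id ⁻¹' (R ○ S)ᶜ) := map_apply (by fun_prop) hRS.compl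
    _ ≤ m (Prod.fst ⁻¹' Rᶜ) + m (Prod.map Prod.snd id ⁻¹' Sᶜ) :=
        (measure_mono hcover).trans (measure_union_le _ _)
    _ ≤ m.fst Rᶜ + m.map (Prod.map Prod.snd id) Sᶜ :=
        add_le_add (le_map_apply (by fun_prop) _) (le_map_apply (by fun_prop) _)

noncomputable def glue [StandardBorelSpace Z] [Nonempty Z] (ν₁ : Measure (X × Y))
    (ν₂ : Measure (Y × Z)) [IsFiniteMeasure ν₂] : Measure ((X × Y) × Z) :=
  ν₁ ⊗ₘ ν₂.condKernel.comap Prod.snd measurable_snd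

variable [StandardBorelSpace Z] [Nonempty Z] (ν₁ : Measure (X × Y)) [SFinite ν₁]
  (ν₂ : Measure (Y × Z)) [IsFiniteMeasure ν₂]

lemma fst_glue : (ν₁.glue ν₂).fst = ν₁ :=
  fst_compProd ν₁ _

lemma map_snd_glue (h : ν₁.snd = ν₂.fst) : (ν₁.glue ν₂).map (Prod.map Prod.snd id) = ν₂ := by
  rw [glue, map_prodMap_compProd_comap ν₁ _ measurable_snd, ← snd, h]
  exact ν₂.disintegrate ν₂.condKernel

end MeasureTheory.Measure

section Coupling

variable [MeasurableSpace X] [MeasurableSpace Y] [MeasurableSpace Z]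
  {ν : Measure (X × Y)} {μ : Measure X} {μ' : Measure Y}

lemma IsCoupling.fst_eq (h : IsCoupling ν μ μ') : ν.fst = μ := h.1

lemma IsCoupling.snd_eq (h : IsCoupling ν μ μ') : ν.snd = μ' := h.2

lemma IsCoupling.isProbabilityMeasure_of_left [IsProbabilityMeasure μ] (h : IsCoupling ν μ μ') :
    IsProbabilityMeasure ν :=
  ⟨by rw [← Measure.fst_univ, h.fst_eq, measure_univ]⟩

lemma IsCoupling.isProbabilityMeasure_of_right [IsProbabilityMeasure μ'] (h : IsCoupling ν μ μ') :
    IsProbabilityMeasure ν :=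
  ⟨by rw [← Measure.snd_univ, h.snd_eq, measure_univ]⟩

lemma IsCoupling.map_glue [StandardBorelSpace Z] [Nonempty Z] {ν₁ : Measure (X × Y)} [SFinite ν₁]
    {ν₂ : Measure (Y × Z)} [IsFiniteMeasure ν₂] {μ'' : Measure Z}
    (h₁ : IsCoupling ν₁ μ μ') (h₂ : IsCoupling ν₂ μ' μ'') :
    IsCoupling ((ν₁.glue ν₂).map (Prod.map Prod.fst id)) μ μ'' := by
  constructor
  · calc ((ν₁.glue ν₂).map (Prod.map Prod.fst id)).fst
        = (ν₁.glue ν₂).map (Prod.fst ∘ Prod.fst) := Measure.map_map (by fun_prop) (by fun_prop)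
      _ = (ν₁.glue ν₂).fst.fst := (Measure.map_map measurable_fst measurable_fst).symm
      _ = μ := by rw [ν₁.fst_glue, h₁.fst_eq]
  · calc ((ν₁.glue ν₂).map (Prod.map Prod.fst id)).snd
        = (ν₁.glue ν₂).map (Prod.snd ∘ Prod.map Prod.snd id) :=
          Measure.map_map (by fun_prop) (by fun_prop)
      _ = ((ν₁.glue ν₂).map (Prod.map Prod.snd id)).snd :=
          (Measure.map_map measurable_snd (by fun_prop)).symm
      _ = μ'' := by rw [ν₁.map_snd_glue ν₂ (h₁.snd_eq.trans h₂.fst_eq.symm), h₂.snd_eq]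

end Coupling

end

theorem composition_of_correspondences_and_couplings_general
    {X Y Z : Type*} [MetricSpace X] [MetricSpace Y] [MetricSpace Z]
    [CompactSpace X] [CompactSpace Y] [CompactSpace Z]
    [Nonempty Z]
    [MeasurableSpace X] [BorelSpace X] [MeasurableSpace Y]
    [MeasurableSpace Z] [BorelSpace Z]
    (μ : Measure X) (μ' : Measure Y) (μ'' : Measure Z)
    [IsProbabilityMeasure μ']
    (R₁ : Set (X × Y)) (R₂ : Set (Y × Z))
    (hR₁c : IsCompact R₁) (hR₁ : IsCorrespondence R₁)
    (hR₂c : IsCompact R₂) (hR₂ : IsCorrespondence R₂)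
    (ν₁ : Measure (X × Y)) (hν₁ : IsCoupling ν₁ μ μ')
    (ν₂ : Measure (Y × Z)) (hν₂ : IsCoupling ν₂ μ' μ'') :
    IsCompact {p : X × Z | ∃ y : Y, (p.1, y) ∈ R₁ ∧ (y, p.2) ∈ R₂} ∧
    IsCorrespondence {p : X × Z | ∃ y : Y, (p.1, y) ∈ R₁ ∧ (y, p.2) ∈ R₂} ∧
    distortion {p : X × Z | ∃ y : Y, (p.1, y) ∈ R₁ ∧ (y, p.2) ∈ R₂} ≤
      distortion R₁ + distortion R₂ ∧
    ∃ ν₃ : Measure (X × Z), IsCoupling ν₃ μ μ'' ∧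
      ν₃ {p : X × Z | ∃ y : Y, (p.1, y) ∈ R₁ ∧ (y, p.2) ∈ R₂}ᶜ ≤ ν₁ R₁ᶜ + ν₂ R₂ᶜ := by
  have := hν₁.isProbabilityMeasure_of_right
  have := hν₂.isProbabilityMeasure_of_left
  -- `R₁ ○ R₂` unfolds to the set in the statement.
  have hcompact : IsCompact (R₁ ○ R₂) := hR₁c.setRelComp hR₂c
  refine ⟨hcompact, hR₁.comp hR₂, distortion_comp_le R₁ R₂, _, hν₁.map_glue hν₂, ?_⟩
  calc _ ≤ (ν₁.glue ν₂).fst R₁ᶜ + (ν₁.glue ν₂).map (Prod.map Prod.snd id) R₂ᶜ :=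
        Measure.map_compl_comp_le _ hcompact.isClosed.measurableSet
    _ = ν₁ R₁ᶜ + ν₂ R₂ᶜ := by
        rw [ν₁.fst_glue, ν₁.map_snd_glue ν₂ (hν₁.snd_eq.trans hν₂.fst_eq.symm)]

/-- Composition of compact correspondences and of couplings: the composed
correspondence is a compact correspondence whose distortion is at most the sum of the
distortions, and there is a coupling of the outer measures giving the composed
correspondence's complement a mass at most the sum of the masses of the complements. -/
theorem composition_of_correspondences_and_couplings
    {X Y Z : Type*} [MetricSpace X] [MetricSpace Y] [MetricSpace Z]
    [CompactSpace X] [CompactSpace Y] [CompactSpace Z]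
    [Nonempty X] [Nonempty Y] [Nonempty Z]
    [MeasurableSpace X] [BorelSpace X] [MeasurableSpace Y] [BorelSpace Y]
    [MeasurableSpace Z] [BorelSpace Z]
    (μ : Measure X) (μ' : Measure Y) (μ'' : Measure Z)
    [IsProbabilityMeasure μ] [IsProbabilityMeasure μ'] [IsProbabilityMeasure μ'']
    (R₁ : Set (X × Y)) (R₂ : Set (Y × Z))
    (hR₁c : IsCompact R₁) (hR₁ : IsCorrespondence R₁)
    (hR₂c : IsCompact R₂) (hR₂ : IsCorrespondence R₂)
    (ν₁ : Measure (X × Y)) (hν₁ : IsCoupling ν₁ μ μ')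
    (ν₂ : Measure (Y × Z)) (hν₂ : IsCoupling ν₂ μ' μ'') :
    IsCompact {p : X × Z | ∃ y : Y, (p.1, y) ∈ R₁ ∧ (y, p.2) ∈ R₂} ∧
    IsCorrespondence {p : X × Z | ∃ y : Y, (p.1, y) ∈ R₁ ∧ (y, p.2) ∈ R₂} ∧
    distortion {p : X × Z | ∃ y : Y, (p.1, y) ∈ R₁ ∧ (y, p.2) ∈ R₂} ≤
      distortion R₁ + distortion R₂ ∧
    ∃ ν₃ : Measure (X × Z), IsCoupling ν₃ μ μ'' ∧
      ν₃ {p : X × Z | ∃ y : Y, (p.1, y) ∈ R₁ ∧ (y, p.2) ∈ R₂}ᶜ ≤ ν₁ R₁ᶜ + ν₂ R₂ᶜ :=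
  composition_of_correspondences_and_couplings_general μ μ' μ'' R₁ R₂ hR₁c hR₁ hR₂c hR₂ ν₁ hν₁ ν₂
    hν₂
end

section
/- Let α > 0 and let f(z) = Σ_{n≥0} h_n z^n be a power series with nonnegative real coefficients satisfying h_n ~ n^{α−1}/Γ(α) as n → ∞ (i.e. h_n Γ(α) n^{1−α} → 1). Then for every φ ∈ (π/2, π), one has (1−z)^α f(z) → 1 as z → 1 with z ranging over the domain D_{1,φ} = {z ∈ ℂ : |z| < 1 and |arg(z−1)| > φ}, where the argument is taken in (−π, π] and (1−z)^α is the principal branch; in other words, f(z) ~ (1−z)^{−α} as z → 1 inside D_{1,φ}. -/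
/-!
The coefficients `c n = Ring.choose (α + n - 1) n` of `(1 - z) ^ (-α)` satisfy
`c n ~ n ^ (α - 1) / Γ(α)` by Euler's limit formula for `Γ`, so `h ~ c`. Bounding `|h n - c n|` by
`ε * c n` beyond some `N` gives
`‖(1 - z) ^ α * f z - 1‖ ≤ C_ε * ‖1 - z‖ ^ α + ε * (‖1 - z‖ / (1 - ‖z‖)) ^ α`,
and on `D_{1,φ}` near `1` the ratio `‖1 - z‖ / (1 - ‖z‖)` stays bounded because
`Re (z - 1) ≤ cos φ * ‖z - 1‖` with `cos φ < 0`: `D_{1,φ}` lies in a Stolz angle at `1`.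
-/

open Filter Complex Topology Finset Asymptotics

lemma tendsto_of_forall_eventually_dist_le {X E : Type*} [PseudoMetricSpace E] {l : Filter X}
    {F : X → E} {y : E} {g : X → ℝ} (hg : Tendsto g l (𝓝 0))
    (h : ∀ ε > 0, ∃ C, ∀ᶠ x in l, dist (F x) y ≤ C * g x + ε) : Tendsto F l (𝓝 y) := by
  refine Metric.tendsto_nhds.mpr fun ε hε ↦ ?_
  obtain ⟨C, hC⟩ := h (ε / 2) (half_pos hε)
  have hCg : Tendsto (fun x ↦ C * g x) l (𝓝 0) := by simpa using hg.const_mul C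
  filter_upwards [hC, hCg.eventually (gt_mem_nhds (half_pos hε))] with x hx hx'
  linarith

lemma isEquivalent_inv_of_tendsto_mul {ι 𝕜 : Type*} [NormedField 𝕜] {l : Filter ι}
    {u v : ι → 𝕜} (h : Tendsto (fun x ↦ u x * v x) l (𝓝 1)) : u ~[l] fun x ↦ (v x)⁻¹ :=
  isEquivalent_of_tendsto_one (by simpa [Pi.div_def, div_inv_eq_mul] using h)

lemma norm_tsum_sub_tsum_le {a b : ℕ → ℝ} (hb : ∀ n, 0 ≤ b n) {ε : ℝ} (hε : 0 ≤ ε) {N : ℕ}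
    (hN : ∀ n ≥ N, |a n - b n| ≤ ε * b n) {z : ℂ} (hz : ‖z‖ ≤ 1)
    (hbz : Summable fun n ↦ b n * ‖z‖ ^ n) :
    ‖∑' n, (a n : ℂ) * z ^ n - ∑' n, (b n : ℂ) * z ^ n‖
      ≤ ∑ n ∈ range N, |a n - b n| + ε * ∑' n, b n * ‖z‖ ^ n := by
  set g : ℕ → ℝ := fun n ↦ (if n ∈ range N then |a n - b n| else 0) + ε * (b n * ‖z‖ ^ n)
  have hg : HasSum g (∑ n ∈ range N, |a n - b n| + ε * ∑' n, b n * ‖z‖ ^ n) := by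
    refine HasSum.add ?_ (hbz.hasSum.mul_left ε)
    have := hasSum_sum_of_ne_finset_zero (L := .unconditional ℕ) (s := range N)
      (f := fun n ↦ if n ∈ range N then |a n - b n| else 0) fun n hn ↦ if_neg hn
    rwa [sum_ite_mem, inter_self] at this
  have hbound : ∀ n, ‖((a n - b n : ℝ) : ℂ) * z ^ n‖ ≤ g n := by
    intro n
    have hzn : ‖z‖ ^ n ≤ 1 := pow_le_one₀ (norm_nonneg z) hz
    rw [norm_mul, norm_pow, norm_real, Real.norm_eq_abs]
    by_cases hn : n ∈ range N
    · simp only [g, if_pos hn]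
      have := mul_nonneg hε (mul_nonneg (hb n) (pow_nonneg (norm_nonneg z) n))
      nlinarith [abs_nonneg (a n - b n)]
    · simp only [g, if_neg hn, zero_add, ← mul_assoc]
      exact mul_le_mul_of_nonneg_right (hN n (by simpa using hn)) (by positivity)
  have hsub : Summable fun n ↦ ((a n - b n : ℝ) : ℂ) * z ^ n :=
    .of_norm_bounded hg.summable hbound
  have hbz' : Summable fun n ↦ (b n : ℂ) * z ^ n :=
    .of_norm (hbz.congr fun n ↦ by simp [abs_of_nonneg (hb n)])
  have haz : Summable fun n ↦ (a n : ℂ) * z ^ n :=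
    (hsub.add hbz').congr fun n ↦ by push_cast; ring
  rw [← haz.tsum_sub hbz']
  refine tsum_of_norm_bounded hg fun n ↦ ?_
  simpa [sub_mul] using hbound n

lemma ascPochhammer_eval_eq_prod (α : ℝ) (n : ℕ) :
    (ascPochhammer ℝ n).eval α = ∏ j ∈ range n, (α + j) := by
  induction n with
  | zero => simp
  | succ n ih => rw [ascPochhammer_succ_eval, ih, prod_range_succ]

lemma choose_add_sub_one_eq_ascPochhammer_div (α : ℝ) (n : ℕ) :
    Ring.choose (α + n - 1) n = (ascPochhammer ℝ n).eval α / n.factorial := by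
  rw [← Ring.multichoose_eq, eq_div_iff (by positivity), mul_comm, ← nsmul_eq_mul,
    Ring.factorial_nsmul_multichoose_eq_ascPochhammer, Polynomial.ascPochhammer_smeval_eq_eval]

lemma choose_add_sub_one_pos {α : ℝ} (hα : 0 < α) (n : ℕ) : 0 < Ring.choose (α + n - 1) n := by
  rw [choose_add_sub_one_eq_ascPochhammer_div]
  exact div_pos (ascPochhammer_pos n α hα) (by positivity)

lemma choose_add_sub_one_mul_GammaSeq {α : ℝ} (hα : 0 < α) (n : ℕ) :
    Ring.choose (α + n - 1) n * Real.GammaSeq α n = n ^ α / (n + α) := by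
  have hP := ascPochhammer_pos n α hα
  rw [choose_add_sub_one_eq_ascPochhammer_div, Real.GammaSeq, prod_range_succ,
    ← ascPochhammer_eval_eq_prod]
  field_simp
  ring

lemma tendsto_choose_add_sub_one_mul_Gamma_mul_rpow {α : ℝ} (hα : 0 < α) :
    Tendsto (fun n : ℕ ↦ Ring.choose (α + n - 1) n * Real.Gamma α * (n : ℝ) ^ (1 - α))
      atTop (𝓝 1) := by
  have hΓ : Real.Gamma α ≠ 0 := (Real.Gamma_pos_of_pos hα).ne'
  have hlim : Tendsto (fun n : ℕ ↦ Real.Gamma α / Real.GammaSeq α n * (n / (n + α)))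
      atTop (𝓝 1) := by
    simpa [div_self hΓ] using
      ((tendsto_const_nhds (x := Real.Gamma α)).div (Real.GammaSeq_tendsto_Gamma α) hΓ).mul
        (tendsto_natCast_div_add_atTop α)
  refine hlim.congr' ?_
  filter_upwards [eventually_gt_atTop 0] with n hn
  have hn' : (0 : ℝ) < n := Nat.cast_pos.mpr hn
  have hS : 0 < Real.GammaSeq α n :=
    div_pos (by positivity) (prod_pos fun j _ ↦ by positivity)
  have hc : Ring.choose (α + n - 1) n = n ^ α / (n + α) / Real.GammaSeq α n := by
    rw [eq_div_iff hS.ne', choose_add_sub_one_mul_GammaSeq hα]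
  rw [hc, Real.rpow_sub hn', Real.rpow_one]
  field_simp

lemma hasSum_choose_mul_pow (a : ℂ) {z : ℂ} (hz : ‖z‖ < 1) :
    HasSum (fun n : ℕ ↦ Ring.choose (a + n - 1) n * z ^ n) ((1 - z) ^ (-a)) := by
  have := (one_div_one_sub_cpow_hasFPowerSeriesOnBall_zero a).hasSum
    (y := z) (by rwa [mem_eball_zero_iff, ← ofReal_norm, ENNReal.ofReal_lt_one])
  simpa [FormalMultilinearSeries.ofScalars_apply_eq, cpow_neg, mul_comm] using this

lemma hasSum_choose_mul_pow_real (α : ℝ) {r : ℝ} (hr0 : 0 ≤ r) (hr : r < 1) :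
    HasSum (fun n : ℕ ↦ Ring.choose (α + n - 1) n * r ^ n) ((1 - r) ^ (-α)) := by
  have h := hasSum_choose_mul_pow α (z := r) (by simpa [abs_of_nonneg hr0] using hr)
  rw [← Complex.hasSum_ofReal]
  convert h using 1
  · ext n; push_cast; rfl
  · rw [Complex.ofReal_cpow (by linarith)]; push_cast; rfl

lemma norm_one_sub_cpow_mul_tsum_sub_one_le {α : ℝ} (hα : 0 < α) {a : ℕ → ℝ} {ε : ℝ}
    (hε : 0 ≤ ε) {N : ℕ}
    (hN : ∀ n ≥ N, |a n - Ring.choose (α + n - 1) n| ≤ ε * Ring.choose (α + n - 1) n)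
    {z : ℂ} (hz : ‖z‖ < 1) :
    ‖(1 - z) ^ (α : ℂ) * ∑' n, (a n : ℂ) * z ^ n - 1‖
      ≤ ‖1 - z‖ ^ α * ∑ n ∈ range N, |a n - Ring.choose (α + n - 1) n|
        + ε * (‖1 - z‖ / (1 - ‖z‖)) ^ α := by
  have hρ := hasSum_choose_mul_pow_real α (norm_nonneg z) hz
  have hc : ∑' n : ℕ, ((Ring.choose (α + n - 1) n : ℝ) : ℂ) * z ^ n = (1 - z) ^ (-(α : ℂ)) := by
    simpa [ofReal_choose] using (hasSum_choose_mul_pow α hz).tsum_eq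
  have hdiff := norm_tsum_sub_tsum_le (fun n ↦ (choose_add_sub_one_pos hα n).le) hε hN hz.le
    hρ.summable
  rw [hρ.tsum_eq, hc] at hdiff
  have h1z : (1 : ℂ) - z ≠ 0 := by
    rw [sub_ne_zero]; rintro rfl; simp at hz
  have h1ρ : 0 < 1 - ‖z‖ := sub_pos.mpr hz
  have hinv : (1 - z) ^ (α : ℂ) * (1 - z) ^ (-(α : ℂ)) = 1 := by
    rw [cpow_neg, mul_inv_cancel₀ (cpow_ne_zero_iff.mpr (Or.inl h1z))]
  rw [show (1 - z) ^ (α : ℂ) * ∑' n, (a n : ℂ) * z ^ n - 1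
      = (1 - z) ^ (α : ℂ) * (∑' n, (a n : ℂ) * z ^ n - (1 - z) ^ (-(α : ℂ))) by
    rw [mul_sub, hinv], norm_mul, norm_cpow_real]
  calc ‖1 - z‖ ^ α * ‖∑' n, (a n : ℂ) * z ^ n - (1 - z) ^ (-(α : ℂ))‖
      ≤ ‖1 - z‖ ^ α * (∑ n ∈ range N, |a n - Ring.choose (α + n - 1) n|
          + ε * (1 - ‖z‖) ^ (-α)) := by gcongr
    _ = _ := by
      rw [Real.div_rpow (norm_nonneg _) h1ρ.le, Real.rpow_neg h1ρ.le]
      ring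

theorem tendsto_one_sub_cpow_mul_tsum_of_isEquivalent {α : ℝ} (hα : 0 < α) {a : ℕ → ℝ}
    (ha : a ~[atTop] fun n : ℕ ↦ Ring.choose (α + n - 1) n) {l : Filter ℂ} (hl : l ≤ 𝓝 1)
    (hdisk : ∀ᶠ z in l, ‖z‖ < 1) (hstolz : (fun z : ℂ ↦ 1 - z) =O[l] fun z ↦ 1 - ‖z‖) :
    Tendsto (fun z : ℂ ↦ (1 - z) ^ (α : ℂ) * ∑' n, (a n : ℂ) * z ^ n) l (𝓝 1) := by
  obtain ⟨M, hM, hMbound⟩ := hstolz.exists_pos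
  have hg : Tendsto (fun z : ℂ ↦ ‖1 - z‖ ^ α) (𝓝 1) (𝓝 0) := by
    simpa [Real.zero_rpow hα.ne'] using
      ((continuous_sub_left (1 : ℂ)).norm.rpow_const fun _ ↦ Or.inr hα.le).tendsto (1 : ℂ)
  refine tendsto_of_forall_eventually_dist_le (hg.mono_left hl) fun ε hε ↦ ?_
  have hMα : 0 < M ^ α := Real.rpow_pos_of_pos hM α
  have hε' : 0 < ε / M ^ α := div_pos hε hMα
  obtain ⟨N, hN⟩ := eventually_atTop.mp (ha.isLittleO.def hε')
  have hN' : ∀ n ≥ N, |a n - Ring.choose (α + n - 1) n| ≤ ε / M ^ α * Ring.choose (α + n - 1) n :=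
    fun n hn ↦ by simpa [abs_of_pos (choose_add_sub_one_pos hα n)] using hN n hn
  refine ⟨∑ n ∈ range N, |a n - Ring.choose (α + n - 1) n|, ?_⟩
  filter_upwards [hdisk, hMbound.bound] with z hz hzM
  have h1ρ : 0 < 1 - ‖z‖ := sub_pos.mpr hz
  have hratio : ‖1 - z‖ / (1 - ‖z‖) ≤ M := by
    rwa [div_le_iff₀ h1ρ, ← Real.norm_of_nonneg h1ρ.le]
  rw [dist_eq]
  calc _ ≤ _ := norm_one_sub_cpow_mul_tsum_sub_one_le hα hε'.le hN' hz
    _ ≤ (∑ n ∈ range N, |a n - Ring.choose (α + n - 1) n|) * ‖1 - z‖ ^ α + ε / M ^ α * M ^ α := by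
      rw [mul_comm]
      gcongr
    _ = _ := by rw [div_mul_cancel₀ _ hMα.ne']

lemma mul_norm_sub_one_le_of_cos_arg_le {z : ℂ} {κ : ℝ}
    (hcos : Real.cos (arg (z - 1)) ≤ -κ) (hzκ : ‖z - 1‖ ≤ κ) :
    κ * ‖z - 1‖ ≤ 2 * (1 - ‖z‖) := by
  have hre : (z - 1).re ≤ -κ * ‖z - 1‖ := by
    rw [← norm_mul_cos_arg]
    nlinarith [norm_nonneg (z - 1)]
  have hsq : ‖z‖ ^ 2 = 1 + 2 * (z - 1).re + ‖z - 1‖ ^ 2 := by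
    simp only [Complex.sq_norm, normSq_apply, sub_re, sub_im, one_re, one_im]
    ring
  nlinarith [sq_nonneg (1 - ‖z‖), mul_nonneg (norm_nonneg (z - 1)) (sub_nonneg.mpr hzκ)]

lemma isBigO_one_sub_one_sub_norm {φ : ℝ} (hφ : φ ∈ Set.Ioo (Real.pi / 2) Real.pi) :
    (fun z : ℂ ↦ 1 - z) =O[𝓝[{z : ℂ | φ < |arg (z - 1)|}] 1] fun z ↦ 1 - ‖z‖ := by
  have hκ : 0 < -Real.cos φ := neg_pos.mpr
    (Real.cos_neg_of_pi_div_two_lt_of_lt hφ.1 (by linarith [hφ.2, Real.pi_pos]))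
  have hnear : ∀ᶠ z : ℂ in 𝓝 1, ‖z - 1‖ ≤ -Real.cos φ := by
    filter_upwards [Metric.closedBall_mem_nhds (1 : ℂ) hκ] with z hz
    rwa [Metric.mem_closedBall, dist_eq] at hz
  refine .of_bound (2 / -Real.cos φ) ?_
  filter_upwards [self_mem_nhdsWithin, nhdsWithin_le_nhds hnear] with z hz hzκ
  have hcos : Real.cos (arg (z - 1)) ≤ -(-Real.cos φ) := by
    rw [neg_neg, ← Real.cos_abs]
    exact Real.cos_le_cos_of_nonneg_of_le_pi (by linarith [hφ.1, Real.pi_pos])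
      (abs_arg_le_pi _) (le_of_lt hz)
  have hbound := mul_norm_sub_one_le_of_cos_arg_le hcos hzκ
  rw [norm_sub_rev, Real.norm_eq_abs, div_mul_eq_mul_div, le_div_iff₀ hκ]
  linarith [le_abs_self (1 - ‖z‖)]

theorem tauberian_in_domain_general (α : ℝ) (hα : 0 < α) (h : ℕ → ℝ)
    (hasymp : Tendsto (fun n : ℕ => h n * Real.Gamma α * (n : ℝ) ^ ((1 : ℝ) - α))
      atTop (nhds 1)) :
    ∀ φ : ℝ, φ ∈ Set.Ioo (Real.pi / 2) Real.pi →
      Tendsto (fun z : ℂ => (1 - z) ^ (α : ℂ) * ∑' n : ℕ, (h n : ℂ) * z ^ n)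
        (nhdsWithin 1 {z : ℂ | ‖z‖ < 1 ∧ φ < |Complex.arg (z - 1)|})
        (nhds 1) := by
  intro φ hφ
  have hequiv : h ~[atTop] fun n : ℕ ↦ Ring.choose (α + n - 1) n := by
    have hc := tendsto_choose_add_sub_one_mul_Gamma_mul_rpow hα
    simp only [mul_assoc] at hasymp hc
    exact (isEquivalent_inv_of_tendsto_mul hasymp).trans (isEquivalent_inv_of_tendsto_mul hc).symm
  exact tendsto_one_sub_cpow_mul_tsum_of_isEquivalent hα hequiv nhdsWithin_le_nhds
    (eventually_nhdsWithin_of_forall fun z hz ↦ hz.1)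
    ((isBigO_one_sub_one_sub_norm hφ).mono (nhdsWithin_mono _ fun z hz ↦ hz.2))

/-- If `h_n ≥ 0` and `h_n ~ n^{α−1}/Γ(α)`, then `f(z) = Σ h_n z^n` satisfies
`(1−z)^α f(z) → 1` as `z → 1` inside any domain `D_{1,φ} = {|z| < 1, |arg(z−1)| > φ}`
with `φ ∈ (π/2, π)`. -/
theorem tauberian_in_domain (α : ℝ) (hα : 0 < α) (h : ℕ → ℝ) (hpos : ∀ n, 0 ≤ h n)
    (hasymp : Tendsto (fun n : ℕ => h n * Real.Gamma α * (n : ℝ) ^ ((1 : ℝ) - α))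
      atTop (nhds 1)) :
    ∀ φ : ℝ, φ ∈ Set.Ioo (Real.pi / 2) Real.pi →
      Tendsto (fun z : ℂ => (1 - z) ^ (α : ℂ) * ∑' n : ℕ, (h n : ℂ) * z ^ n)
        (nhdsWithin 1 {z : ℂ | ‖z‖ < 1 ∧ φ < |Complex.arg (z - 1)|})
        (nhds 1) :=
  tauberian_in_domain_general α hα h hasymp
end
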